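/- Let m ∈ (1/2)ℤ_{>0} and j ∈ (1/2)ℤ. For every τ with Im τ > 0 and every v ∈ ℂ: (a) R^{±}_{j,m}(τ, v + 1) = (−1)^{2j} R^{±}_{j,m}(τ, v); (b) R^{±}_{j,m}(τ, v) ∓ e^{2πi m (2v − τ)} R^{±}_{j,m}(τ, v − τ) = 2 q^{−j²/(4m)} e^{2πi j v}; (c) R^{±}_{j,m}(τ, v) − e^{8πi m (v − τ)} R^{±}_{j,m}(τ, v − 2τ) = 2 ( q^{−j²/(4m)} e^{2πi j v} ± q^{−(j+2m)²/(4m)} e^{2πi (j+2m) v} ). -/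

import Mathlib

noncomputable section

open Complex

/-- `mexp w = e^{2πi w}`. -/
def mexp (w : ℂ) : ℂ := Complex.exp (2 * (Real.pi : ℂ) * Complex.I * w)

/-- The signed mock theta function `Φ^{sgn[m;s]}(τ,z₁,z₂)`. -/
def PhiS (sgn : ℂ) (m s : ℝ) (τ z₁ z₂ : ℂ) : ℂ :=
  ∑' n : ℤ, sgn ^ n *
    mexp ((m : ℂ) * n * (z₁ + z₂) + (s : ℂ) * z₁ + τ * ((m : ℂ) * n ^ 2 + (s : ℂ) * n)) /
    (1 - mexp (z₁ + n * τ))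

/-- The signed theta function `Θ^{sgn}_{j,m}(τ,z)`. -/
def ThetaS (sgn : ℂ) (j m : ℝ) (τ z : ℂ) : ℂ :=
  ∑' n : ℤ, sgn ^ n *
    mexp ((m : ℂ) * z * ((n : ℂ) + ((j / (2 * m) : ℝ) : ℂ)) +
      τ * (m : ℂ) * ((n : ℂ) + ((j / (2 * m) : ℝ) : ℂ)) ^ 2)

/-- `E(x) = 2∫₀ˣ e^{-πu²} du`. -/
def Efun (x : ℝ) : ℝ := 2 * ∫ u in (0:ℝ)..x, Real.exp (-Real.pi * u ^ 2)

/-- `ψ_{m,n}(τ,z) = (n - 2m Im z / Im τ) √(Im τ / m)`. -/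
def psiMN (m n : ℝ) (τ z : ℂ) : ℝ := (n - 2 * m * z.im / τ.im) * Real.sqrt (τ.im / m)

/-- The real-analytic correction `R^{sgn}_{j,m}(τ,z)`; the summation variable `n ∈ j + 2mℤ`
is written as `n = j + 2mk`, `k ∈ ℤ`, so that `(±1)^{(n-j)/(2m)} = sgn^k`. -/
def RS (sgn : ℂ) (j m : ℝ) (τ z : ℂ) : ℂ :=
  ∑' k : ℤ, sgn ^ k *
    (((Real.sign (j + 2 * m * k - 1 / 2 - j + 2 * m) -
        Efun (psiMN m (j + 2 * m * k) τ z) : ℝ)) : ℂ) *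
    Complex.exp (-(Real.pi : ℂ) * Complex.I * (((j + 2 * m * k : ℝ)) : ℂ) ^ 2 * τ / (2 * (m : ℂ))
      + 2 * (Real.pi : ℂ) * Complex.I * (((j + 2 * m * k : ℝ)) : ℂ) * z)

/-- The modifier `Φ^{sgn[m;s]}_add`; the summation variable `j ∈ s + ℤ`, `s ≤ j < s + 2m`
is written as `j = s + i`, `0 ≤ i < ⌈2m⌉`. -/
def PhiAddS (sgn : ℂ) (m s : ℝ) (τ z₁ z₂ : ℂ) : ℂ :=
  ∑ i ∈ Finset.range ⌈2 * m⌉₊,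
    RS sgn (s + i) m τ ((z₁ - z₂) / 2) * ThetaS sgn (s + i) m τ (z₁ + z₂)

/-- The modified (signed) mock theta function `Φ̃^{sgn[m;s]}`. -/
def PhiTilde (sgn : ℂ) (m s : ℝ) (τ z₁ z₂ : ℂ) : ℂ :=
  PhiS sgn m s τ z₁ z₂ - (1 / 2) * PhiAddS sgn m s τ z₁ z₂

end

/-!
`R^{±}_{j,m}(τ, z)` is a sum over `n ∈ j + 2mℤ`. Shifting `z` by `1` multiplies the `n`-th term by
`e^{2πin} = e^{2πij}`. Shifting `z` by `τ` and multiplying by `e^{2πim(2z - τ)}` carries the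
exponential of the `n`-th term to that of the `(n + 2m)`-th, and also `ψ_{m,n}` to `ψ_{m,n+2m}`;
only the sign factor `sign(n - 1/2 - j + 2m)` fails to follow, and it jumps by `2` exactly between
`n = j - 2m` and `n = j`, which leaves the single term `2 q^{-j²/(4m)} e^{2πijv}`. Applying this
twice gives (c). Reindexing is legitimate because the series converge absolutely: once the sign
agrees with that of `ψ`, `|sign - E(ψ)| ≤ e^{-πψ²}`, and this Gaussian beats the growth of
`e^{-πin²τ/(2m) + 2πinz}`, leaving a Jacobi theta summand.
-/

open Complex Real Filter MeasureTheory Set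

lemma Efun_neg (x : ℝ) : Efun (-x) = -Efun x := by
  have hcomp := intervalIntegral.integral_comp_neg (a := 0) (b := x)
    (fun u : ℝ => rexp (-π * u ^ 2))
  simp only [neg_sq, neg_zero] at hcomp
  rw [Efun, Efun, intervalIntegral.integral_symm, ← hcomp]
  ring

lemma integral_Ioi_zero_gaussian : ∫ u in Ioi (0 : ℝ), rexp (-π * u ^ 2) = 1 / 2 := by
  simpa [div_self pi_ne_zero] using integral_gaussian_Ioi π

lemma one_sub_Efun {t : ℝ} (ht : 0 ≤ t) :
    1 - Efun t = 2 * ∫ u in Ioi t, rexp (-π * u ^ 2) := by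
  have hsplit := intervalIntegral.integral_Ioi_sub_Ioi
    (integrable_exp_neg_mul_sq pi_pos).integrableOn ht
  rw [integral_Ioi_zero_gaussian] at hsplit
  rw [Efun, ← hsplit]
  ring

lemma integral_Ioi_gaussian_le {t : ℝ} (ht : 0 ≤ t) :
    ∫ u in Ioi t, rexp (-π * u ^ 2) ≤ rexp (-π * t ^ 2) / 2 := by
  have hshift : ∫ u in Ioi t, rexp (-π * u ^ 2) = ∫ u in Ioi (0 : ℝ), rexp (-π * (u + t) ^ 2) := by
    have hpre : (· + t) ⁻¹' Ioi t = Ioi (0 : ℝ) := by ext u; simp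
    rw [← (measurePreserving_add_right volume t).setIntegral_preimage_emb
      (MeasurableEquiv.addRight t).measurableEmbedding _ (Ioi t), hpre]
  have hgauss := integrable_exp_neg_mul_sq pi_pos
  calc ∫ u in Ioi t, rexp (-π * u ^ 2)
      ≤ ∫ u in Ioi (0 : ℝ), rexp (-π * t ^ 2) * rexp (-π * u ^ 2) := by
        rw [hshift]
        refine setIntegral_mono_on (hgauss.comp_add_right t).integrableOn
          (hgauss.const_mul _).integrableOn measurableSet_Ioi fun u (hu : 0 < u) => ?_
        rw [← Real.exp_add, Real.exp_le_exp]
        nlinarith [mul_nonneg (mul_nonneg pi_pos.le ht) hu.le]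
    _ = rexp (-π * t ^ 2) / 2 := by rw [integral_const_mul, integral_Ioi_zero_gaussian]; ring

lemma abs_one_sub_Efun_le {t : ℝ} (ht : 0 ≤ t) : |1 - Efun t| ≤ rexp (-π * t ^ 2) := by
  have hnonneg : 0 ≤ ∫ u in Ioi t, rexp (-π * u ^ 2) :=
    setIntegral_nonneg measurableSet_Ioi fun u _ => (Real.exp_pos _).le
  rw [one_sub_Efun ht, abs_of_nonneg (by positivity)]
  linarith [integral_Ioi_gaussian_le ht]

lemma abs_sign_sub_Efun_le {s x : ℝ} (h : 0 < s * x) :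
    |Real.sign s - Efun x| ≤ rexp (-π * x ^ 2) := by
  rcases pos_and_pos_or_neg_and_neg_of_mul_pos h with ⟨hs, hx⟩ | ⟨hs, hx⟩
  · rw [Real.sign_of_pos hs]
    exact abs_one_sub_Efun_le hx.le
  · rw [Real.sign_of_neg hs, ← neg_neg x, Efun_neg, ← abs_neg, neg_sq]
    convert abs_one_sub_Efun_le (neg_nonneg.2 hx.le) using 2
    ring

lemma eventually_pos_mul_affine {a : ℝ} (ha : 0 < a) (p q : ℝ) :
    ∀ᶠ k : ℤ in cofinite, 0 < (a * k + p) * (a * k + q) := by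
  have hbot (p : ℝ) : ∀ᶠ k : ℤ in atBot, a * k + p < 0 :=
    (tendsto_atBot_add_const_right _ p
      ((tendsto_intCast_atBot_iff.2 tendsto_id).const_mul_atBot ha)).eventually_lt_atBot 0
  have htop (p : ℝ) : ∀ᶠ k : ℤ in atTop, 0 < a * k + p :=
    (tendsto_atTop_add_const_right _ p
      (tendsto_intCast_atTop_atTop.const_mul_atTop ha)).eventually_gt_atTop 0
  rw [Int.cofinite_eq, eventually_sup]
  exact ⟨(hbot p).and (hbot q) |>.mono fun k hk => mul_pos_of_neg_of_neg hk.1 hk.2,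
    (htop p).and (htop q) |>.mono fun k hk => mul_pos hk.1 hk.2⟩

lemma mexp_add (a b : ℂ) : mexp (a + b) = mexp a * mexp b := by
  rw [mexp, mexp, mexp, ← Complex.exp_add, mul_add]

lemma mexp_intCast (n : ℤ) : mexp n = 1 := by
  rw [mexp, ← Complex.exp_int_mul_two_pi_mul_I n]
  ring_nf

lemma mexp_intCast_div_two (n : ℤ) : mexp (n / 2) = (-1) ^ n := by
  rw [mexp, ← Complex.exp_pi_mul_I, ← Complex.exp_int_mul]
  ring_nf

lemma psiMN_add_one (m n : ℝ) (τ z : ℂ) : psiMN m n τ (z + 1) = psiMN m n τ z := by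
  simp [psiMN]

lemma psiMN_sub_self (m n : ℝ) {τ : ℂ} (hτ : τ.im ≠ 0) (z : ℂ) :
    psiMN m n τ (z - τ) = psiMN m (n + 2 * m) τ z := by
  rw [psiMN, psiMN, sub_im]
  field_simp
  ring

noncomputable def RSexp (m n : ℝ) (τ z : ℂ) : ℂ :=
  cexp (-(π : ℂ) * I * (n : ℂ) ^ 2 * τ / (2 * (m : ℂ)) + 2 * π * I * n * z)

lemma RSexp_eq_mexp (m n : ℝ) (τ z : ℂ) :
    RSexp m n τ z = mexp (τ * (-((n : ℂ) ^ 2 / (4 * m)))) * mexp (n * z) := by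
  rw [RSexp, mexp, mexp, ← Complex.exp_add]
  ring_nf

lemma RSexp_add_one (m n : ℝ) (τ z : ℂ) : RSexp m n τ (z + 1) = mexp n * RSexp m n τ z := by
  rw [RSexp, RSexp, mexp, ← Complex.exp_add]
  ring_nf

lemma mexp_mul_RSexp_sub_self {m : ℝ} (hm : m ≠ 0) (n : ℝ) (τ z : ℂ) :
    mexp (m * (2 * z - τ)) * RSexp m n τ (z - τ) = RSexp m (n + 2 * m) τ z := by
  have hm' : (m : ℂ) ≠ 0 := ofReal_ne_zero.2 hm
  rw [RSexp, RSexp, mexp, ← Complex.exp_add]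
  congr 1
  push_cast
  field_simp
  ring

lemma norm_RSexp (m n : ℝ) (τ z : ℂ) :
    ‖RSexp m n τ z‖ = rexp (π * n ^ 2 * τ.im / (2 * m) - 2 * π * n * z.im) := by
  have harg : -(π : ℂ) * I * (n : ℂ) ^ 2 * τ / (2 * (m : ℂ)) + 2 * π * I * n * z
      = I * (((-(π * n ^ 2 / (2 * m)) : ℝ) : ℂ) * τ + ((2 * π * n : ℝ) : ℂ) * z) := by
    push_cast
    ring
  rw [RSexp, norm_exp, harg, I_mul_re, add_im, im_ofReal_mul, im_ofReal_mul]
  congr 1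
  ring

noncomputable def RSterm (sgn : ℂ) (j m : ℝ) (τ z : ℂ) (k : ℤ) : ℂ :=
  sgn ^ k * ((Real.sign (j + 2 * m * k - 1 / 2 - j + 2 * m) -
    Efun (psiMN m (j + 2 * m * k) τ z) : ℝ) : ℂ) * RSexp m (j + 2 * m * k) τ z

lemma RS_eq_tsum (sgn : ℂ) (j m : ℝ) (τ z : ℂ) : RS sgn j m τ z = ∑' k : ℤ, RSterm sgn j m τ z k :=
  rfl

section Summability

variable {sgn : ℂ} {j m : ℝ} {τ z : ℂ}

lemma norm_RSterm_le_of_abs_le (hsgn : ‖sgn‖ = 1) (hm : 0 < m) (hτ : 0 < τ.im) {k : ℤ}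
    (hE : |Real.sign (j + 2 * m * k - 1 / 2 - j + 2 * m) - Efun (psiMN m (j + 2 * m * k) τ z)|
      ≤ rexp (-π * psiMN m (j + 2 * m * k) τ z ^ 2)) :
    ‖RSterm sgn j m τ z k‖ ≤ ‖jacobiTheta₂_term k (j * τ - 2 * m * z) (2 * m * τ)‖ := by
  set a := 2 * m * z.im / τ.im
  have hpsi : psiMN m (j + 2 * m * k) τ z ^ 2 = (j + 2 * m * k - a) ^ 2 * (τ.im / m) := by
    rw [psiMN, mul_pow, Real.sq_sqrt (div_nonneg hτ.le hm.le)]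
  -- the exponent is that of the theta summand, minus `π Im τ ((j - a)² + a²) / (2m) ≥ 0`
  have hexp : -π * psiMN m (j + 2 * m * k) τ z ^ 2
        + (π * (j + 2 * m * k) ^ 2 * τ.im / (2 * m) - 2 * π * (j + 2 * m * k) * z.im)
      = -π * k ^ 2 * (2 * m * τ).im - 2 * π * k * (j * τ - 2 * m * z).im
        - π * τ.im / (2 * m) * ((j - a) ^ 2 + a ^ 2) := by
    simp only [hpsi, a, sub_im, mul_im, mul_re, re_ofNat, im_ofNat, ofReal_re, ofReal_im]
    field_simp
    ring
  rw [RSterm, norm_mul, norm_mul, norm_zpow, hsgn, one_zpow, one_mul, norm_real, norm_RSexp,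
    norm_jacobiTheta₂_term]
  calc _ ≤ rexp (-π * psiMN m (j + 2 * m * k) τ z ^ 2)
        * rexp (π * (j + 2 * m * k) ^ 2 * τ.im / (2 * m) - 2 * π * (j + 2 * m * k) * z.im) :=
        mul_le_mul_of_nonneg_right hE (Real.exp_pos _).le
    _ ≤ _ := by
      rw [← Real.exp_add, hexp, Real.exp_le_exp, sub_le_self_iff]
      positivity

lemma summable_RSterm (hsgn : ‖sgn‖ = 1) (hm : 0 < m) (hτ : 0 < τ.im) :
    Summable (RSterm sgn j m τ z) := by
  have htheta : Summable fun k : ℤ => ‖jacobiTheta₂_term k (j * τ - 2 * m * z) (2 * m * τ)‖ :=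
    ((summable_jacobiTheta₂_term_iff _ _).2 (by simpa using mul_pos (mul_pos two_pos hm) hτ)).norm
  refine htheta.of_norm_bounded_eventually ?_
  filter_upwards [eventually_pos_mul_affine (mul_pos two_pos hm) (2 * m - 1 / 2)
    (j - 2 * m * z.im / τ.im)] with k hk
  refine norm_RSterm_le_of_abs_le hsgn hm hτ (abs_sign_sub_Efun_le ?_)
  have hsqrt : 0 < √(τ.im / m) := Real.sqrt_pos.2 (div_pos hτ hm)
  have hprod : (j + 2 * m * k - 1 / 2 - j + 2 * m) * psiMN m (j + 2 * m * k) τ z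
      = (2 * m * k + (2 * m - 1 / 2)) * (2 * m * k + (j - 2 * m * z.im / τ.im)) * √(τ.im / m) := by
    rw [psiMN]
    ring
  exact hprod ▸ mul_pos hk hsqrt

end Summability

lemma RSterm_add_one (sgn : ℂ) (j : ℝ) (m2 : ℤ) (τ z : ℂ) (k : ℤ) :
    RSterm sgn j ((m2 : ℝ) / 2) τ (z + 1) k = mexp j * RSterm sgn j ((m2 : ℝ) / 2) τ z k := by
  have hperiod : mexp ((j + 2 * ((m2 : ℝ) / 2) * k : ℝ) : ℂ) = mexp j := by
    rw [show ((j + 2 * ((m2 : ℝ) / 2) * k : ℝ) : ℂ) = j + ((m2 * k : ℤ) : ℂ) by push_cast; ring,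
      mexp_add, mexp_intCast, mul_one]
  rw [RSterm, RSterm, psiMN_add_one, RSexp_add_one, hperiod]
  ring

lemma RS_add_one (sgn : ℂ) (j : ℝ) (m2 : ℤ) (τ z : ℂ) :
    RS sgn j ((m2 : ℝ) / 2) τ (z + 1) = mexp j * RS sgn j ((m2 : ℝ) / 2) τ z := by
  simp_rw [RS_eq_tsum, RSterm_add_one, tsum_mul_left]

section QuasiPeriodicity

variable {sgn : ℂ} {j m : ℝ} {τ : ℂ}

-- `j + 2mk - 1/2 - j + 2m = 2m(k+1) - 1/2` changes sign exactly between `k = -1` and `k = 0`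
lemma sign_succ_sub_sign (hm : 1 / 4 < m) (k : ℤ) :
    Real.sign (j + 2 * m * ((k + 1 : ℤ) : ℝ) - 1 / 2 - j + 2 * m)
      - Real.sign (j + 2 * m * k - 1 / 2 - j + 2 * m) = if k = -1 then 2 else 0 := by
  push_cast
  rcases lt_trichotomy k (-1) with hk | rfl | hk
  · have hk' : (k : ℝ) ≤ -2 := by exact_mod_cast (show k ≤ -2 by omega)
    rw [Real.sign_of_neg (by nlinarith), Real.sign_of_neg (by nlinarith), if_neg hk.ne]
    norm_num
  · rw [Real.sign_of_pos (by linarith), Real.sign_of_neg (by linarith), if_pos rfl]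
    norm_num
  · have hk' : (0 : ℝ) ≤ k := by exact_mod_cast (show 0 ≤ k by omega)
    rw [Real.sign_of_pos (by nlinarith), Real.sign_of_pos (by nlinarith), if_neg hk.ne']
    norm_num

lemma RSterm_sub_self (hs : sgn ≠ 0) (hm : 1 / 4 < m) (hτ : τ.im ≠ 0) (z : ℂ) (k : ℤ) :
    sgn * mexp (m * (2 * z - τ)) * RSterm sgn j m τ (z - τ) k
      = RSterm sgn j m τ z (k + 1) - if k = -1 then 2 * RSexp m j τ z else 0 := by
  have hn : j + 2 * m * k + 2 * m = j + 2 * m * ((k + 1 : ℤ) : ℝ) := by push_cast; ring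
  have hexp := mexp_mul_RSexp_sub_self (by linarith : m ≠ 0) (j + 2 * m * k) τ z
  rw [hn] at hexp
  have hboundary : (if k = -1 then 2 * RSexp m j τ z else 0)
      = sgn ^ (k + 1) * ((Real.sign (j + 2 * m * ((k + 1 : ℤ) : ℝ) - 1 / 2 - j + 2 * m)
          - Real.sign (j + 2 * m * k - 1 / 2 - j + 2 * m) : ℝ) : ℂ)
        * RSexp m (j + 2 * m * ((k + 1 : ℤ) : ℝ)) τ z := by
    rw [sign_succ_sub_sign hm]
    split_ifs with hk
    · subst hk
      simp
    · simp
  rw [RSterm, RSterm, psiMN_sub_self m _ hτ, hn, hboundary, zpow_add_one₀ hs]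
  simp only [ofReal_sub]
  linear_combination (sgn ^ k * sgn * ((Real.sign (j + 2 * m * k - 1 / 2 - j + 2 * m) : ℂ)
    - (Efun (psiMN m (j + 2 * m * ((k + 1 : ℤ) : ℝ)) τ z) : ℂ))) * hexp

lemma RS_sub_mul_RS_sub_self (hsgn : ‖sgn‖ = 1) (hm : 1 / 4 < m) (hτ : 0 < τ.im) (z : ℂ) :
    RS sgn j m τ z - sgn * mexp (m * (2 * z - τ)) * RS sgn j m τ (z - τ) = 2 * RSexp m j τ z := by
  have hs : sgn ≠ 0 := norm_ne_zero_iff.1 (hsgn ▸ one_ne_zero)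
  have hsum : Summable fun k : ℤ => RSterm sgn j m τ z (k + 1) :=
    (summable_RSterm hsgn (by linarith) hτ).comp_injective (add_left_injective 1)
  have hreindex : ∑' k : ℤ, RSterm sgn j m τ z (k + 1) = ∑' k : ℤ, RSterm sgn j m τ z k :=
    (Equiv.addRight 1).tsum_eq _
  rw [RS_eq_tsum, RS_eq_tsum, ← tsum_mul_left, tsum_congr (RSterm_sub_self hs hm hτ.ne' z),
    hsum.tsum_sub (hasSum_ite_eq (-1 : ℤ) _).summable,
    (hasSum_ite_eq (-1 : ℤ) _).tsum_eq, hreindex]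
  ring

lemma RS_sub_mul_RS_sub_two_mul (hsgn : sgn = 1 ∨ sgn = -1) (hm : 1 / 4 < m) (hτ : 0 < τ.im)
    (z : ℂ) :
    RS sgn j m τ z - mexp (4 * m * (z - τ)) * RS sgn j m τ (z - 2 * τ)
      = 2 * (RSexp m j τ z + sgn * RSexp m (j + 2 * m) τ z) := by
  have hunit : ‖sgn‖ = 1 := by rcases hsgn with rfl | rfl <;> simp
  have hsq : sgn * sgn = 1 := by rcases hsgn with rfl | rfl <;> norm_num
  have hstep := RS_sub_mul_RS_sub_self (j := j) hunit hm hτ z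
  have hstep' := RS_sub_mul_RS_sub_self (j := j) hunit hm hτ (z - τ)
  rw [show z - τ - τ = z - 2 * τ by ring] at hstep'
  have hfactor :
      mexp (m * (2 * z - τ)) * mexp (m * (2 * (z - τ) - τ)) = mexp (4 * m * (z - τ)) := by
    rw [← mexp_add]
    ring_nf
  have hshift := mexp_mul_RSexp_sub_self (by linarith : m ≠ 0) j τ z
  linear_combination hstep + sgn * mexp (m * (2 * z - τ)) * hstep'
    + RS sgn j m τ (z - 2 * τ) * (sgn * sgn * hfactor + mexp (4 * m * (z - τ)) * hsq)
    + 2 * sgn * hshift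

end QuasiPeriodicity

/-- `m = m2/2`, `j = j2/2`; `(-1)^{2j}` is `(-1)^{j2}`, `∓` is `-sgn`, and `q^x = mexp (τ * x)`. -/
theorem stmt15 (m2 : ℤ) (hm2 : 0 < m2) (j2 : ℤ) (sgn : ℂ) (hsgn : sgn = 1 ∨ sgn = -1)
    (τ v : ℂ) (hτ : 0 < τ.im) :
    (RS sgn ((j2 : ℝ) / 2) ((m2 : ℝ) / 2) τ (v + 1) =
      (-1 : ℂ) ^ j2 * RS sgn ((j2 : ℝ) / 2) ((m2 : ℝ) / 2) τ v) ∧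
    (RS sgn ((j2 : ℝ) / 2) ((m2 : ℝ) / 2) τ v -
        sgn * mexp ((m2 : ℂ) / 2 * (2 * v - τ)) * RS sgn ((j2 : ℝ) / 2) ((m2 : ℝ) / 2) τ (v - τ) =
      2 * mexp (τ * (-(((j2 : ℂ) / 2) ^ 2 / (4 * ((m2 : ℂ) / 2))))) *
        mexp ((j2 : ℂ) / 2 * v)) ∧
    (RS sgn ((j2 : ℝ) / 2) ((m2 : ℝ) / 2) τ v -
        mexp (4 * ((m2 : ℂ) / 2) * (v - τ)) * RS sgn ((j2 : ℝ) / 2) ((m2 : ℝ) / 2) τ (v - 2 * τ) =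
      2 * (mexp (τ * (-(((j2 : ℂ) / 2) ^ 2 / (4 * ((m2 : ℂ) / 2))))) * mexp ((j2 : ℂ) / 2 * v) +
        sgn * mexp (τ * (-(((j2 : ℂ) / 2 + 2 * ((m2 : ℂ) / 2)) ^ 2 / (4 * ((m2 : ℂ) / 2))))) *
          mexp (((j2 : ℂ) / 2 + 2 * ((m2 : ℂ) / 2)) * v))) := by
  have hm : 1 / 4 < (m2 : ℝ) / 2 := by
    have : (1 : ℝ) ≤ m2 := by exact_mod_cast hm2
    linarith
  have hunit : ‖sgn‖ = 1 := by rcases hsgn with rfl | rfl <;> simp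
  have hjc : (((j2 : ℝ) / 2 : ℝ) : ℂ) = (j2 : ℂ) / 2 := by push_cast; ring
  have hmc : (((m2 : ℝ) / 2 : ℝ) : ℂ) = (m2 : ℂ) / 2 := by push_cast; ring
  have hjmc :
      (((j2 : ℝ) / 2 + 2 * ((m2 : ℝ) / 2) : ℝ) : ℂ) = (j2 : ℂ) / 2 + 2 * ((m2 : ℂ) / 2) := by
    push_cast; ring
  refine ⟨?_, ?_, ?_⟩
  · rw [RS_add_one, hjc, mexp_intCast_div_two]
  · have hb := RS_sub_mul_RS_sub_self (j := (j2 : ℝ) / 2) hunit hm hτ v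
    rw [RSexp_eq_mexp, hjc, hmc] at hb
    linear_combination hb
  · have hc := RS_sub_mul_RS_sub_two_mul (j := (j2 : ℝ) / 2) hsgn hm hτ v
    rw [RSexp_eq_mexp, RSexp_eq_mexp, hjmc, hjc, hmc] at hc
    linear_combination hc
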